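/- Let M ≥ 1, h = 1/M, Δt > 0, and let dᵐ, wᵐ, w^s, d^{s+1}, w^{s+1} : (ℤ/Mℤ)³ → ℝ³ be grid functions satisfying, at every grid point i, (d^{s+1}_i − dᵐ_i)/Δt = ((dᵐ_i + d^{s+1}_i)/2) × ((wᵐ_i + w^s_i)/2) and (w^{s+1}_i − wᵐ_i)/Δt = (Δ_h ((dᵐ + d^{s+1})/2))_i × ((dᵐ_i + d^{s+1}_i)/2). Then ½(‖w^{s+1}‖² + ‖∇_h d^{s+1}‖²) = ½(‖wᵐ‖² + ‖∇_h dᵐ‖²) + ½ ⟨w^{s+1} − wᵐ, w^{s+1} − w^s⟩. In particular, the deviation of the iterate's energy from ½(‖wᵐ‖² + ‖∇_h dᵐ‖²) is at most ½ ‖w^{s+1} − wᵐ‖ ‖w^{s+1} − w^s‖. -/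

import Mathlib

/-!
Dotting the `w`-equation with the midpoint `(wᵐ + wˢ)/2` and using the triple product
together with the `d`-equation turns this dot product into `⟨Δ_h d̄, dˢ⁺¹ − dᵐ⟩`, where
`d̄ = (dᵐ + dˢ⁺¹)/2`. Periodic summation by parts makes that `−⟨∇_h d̄, ∇_h (dˢ⁺¹ − dᵐ)⟩`,
which is minus half the increment of `‖∇_h d‖²`. Since the midpoint uses `wˢ` rather than
`wˢ⁺¹`, the kinetic increment `‖wˢ⁺¹‖² − ‖wᵐ‖²` exceeds it by `⟨wˢ⁺¹ − wᵐ, wˢ⁺¹ − wˢ⟩`.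
The bound is Cauchy–Schwarz.
-/

noncomputable section
open scoped BigOperators

/-- Forward difference `D⁺_j` of a periodic grid function on `(ℤ/Mℤ)³`. -/
def Dp {M : ℕ} (h : ℝ) (u : (Fin 3 → ZMod M) → Fin 3 → ℝ) (j : Fin 3)
    (i : Fin 3 → ZMod M) : Fin 3 → ℝ :=
  h⁻¹ • (u (i + Pi.single j 1) - u i)

/-- Backward difference `D⁻_j`. -/
def Dm {M : ℕ} (h : ℝ) (u : (Fin 3 → ZMod M) → Fin 3 → ℝ) (j : Fin 3)
    (i : Fin 3 → ZMod M) : Fin 3 → ℝ :=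
  h⁻¹ • (u i - u (i - Pi.single j 1))

/-- Discrete Laplacian `Δ_h = Σ_j D⁺_j D⁻_j`. -/
def lapl {M : ℕ} (h : ℝ) (u : (Fin 3 → ZMod M) → Fin 3 → ℝ)
    (i : Fin 3 → ZMod M) : Fin 3 → ℝ :=
  ∑ j, Dp h (Dm h u j) j i

/-- Squared discrete L² norm: `‖u‖² = h³ Σ_i |u(i)|²`. -/
def l2sq {M : ℕ} [NeZero M] (h : ℝ) (u : (Fin 3 → ZMod M) → Fin 3 → ℝ) : ℝ :=
  h ^ 3 * ∑ i, ∑ k, u i k ^ 2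

/-- Discrete L² norm. -/
def l2norm {M : ℕ} [NeZero M] (h : ℝ) (u : (Fin 3 → ZMod M) → Fin 3 → ℝ) : ℝ :=
  Real.sqrt (l2sq h u)

/-- Squared discrete L² norm of the backward gradient:
`‖∇_h u‖² = h³ Σ_i Σ_j |D⁻_j u(i)|²`. -/
def gradsq {M : ℕ} [NeZero M] (h : ℝ) (u : (Fin 3 → ZMod M) → Fin 3 → ℝ) : ℝ :=
  h ^ 3 * ∑ i, ∑ j, ∑ k, Dm h u j i k ^ 2

/-- Discrete L² inner product: `⟨u,v⟩ = h³ Σ_i u(i)·v(i)`. -/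
def l2inner {M : ℕ} [NeZero M] (h : ℝ) (u v : (Fin 3 → ZMod M) → Fin 3 → ℝ) : ℝ :=
  h ^ 3 * ∑ i, ∑ k, u i k * v i k

open Matrix

theorem dotProduct_eq_of_inv_smul_eq_cross {τ : ℝ} (hτ : τ ≠ 0) {x y d w L : Fin 3 → ℝ}
    (hx : τ⁻¹ • x = d ⨯₃ w) (hy : τ⁻¹ • y = L ⨯₃ d) : y ⬝ᵥ w = L ⬝ᵥ x := by
  have hy' : y = τ • (L ⨯₃ d) := by rw [← hy, smul_inv_smul₀ hτ]
  have hx' : x = τ • (d ⨯₃ w) := by rw [← hx, smul_inv_smul₀ hτ]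
  rw [hy', hx', smul_dotProduct, dotProduct_smul, dotProduct_comm, triple_product_permutation]

section GridCalculus

variable {M : ℕ} (h : ℝ)

theorem Dm_add (u v : (Fin 3 → ZMod M) → Fin 3 → ℝ) (j : Fin 3) :
    Dm h (u + v) j = Dm h u j + Dm h v j := by
  funext i; simp only [Dm, Pi.add_apply]; module

theorem Dm_sub (u v : (Fin 3 → ZMod M) → Fin 3 → ℝ) (j : Fin 3) :
    Dm h (u - v) j = Dm h u j - Dm h v j := by
  funext i; simp only [Dm, Pi.sub_apply]; module

theorem Dm_smul (c : ℝ) (u : (Fin 3 → ZMod M) → Fin 3 → ℝ) (j : Fin 3) :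
    Dm h (c • u) j = c • Dm h u j := by
  funext i; simp only [Dm, Pi.smul_apply]; module

variable [NeZero M]

/-- `⟨∇_h u, ∇_h v⟩` -/
def gradInner (u v : (Fin 3 → ZMod M) → Fin 3 → ℝ) : ℝ :=
  h ^ 3 * ∑ i, ∑ j, Dm h u j i ⬝ᵥ Dm h v j i

theorem gradsq_eq_gradInner (u : (Fin 3 → ZMod M) → Fin 3 → ℝ) :
    gradsq h u = gradInner h u u := by
  simp only [gradsq, gradInner, dotProduct, sq]

theorem l2inner_eq_sum_dotProduct (u v : (Fin 3 → ZMod M) → Fin 3 → ℝ) :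
    l2inner h u v = h ^ 3 * ∑ i, u i ⬝ᵥ v i := rfl

theorem sum_Dp_dotProduct (u v : (Fin 3 → ZMod M) → Fin 3 → ℝ) (j : Fin 3) :
    ∑ i, Dp h u j i ⬝ᵥ v i = -∑ i, u i ⬝ᵥ Dm h v j i := by
  have shift : ∑ i, u (i + Pi.single j 1) ⬝ᵥ v i = ∑ i, u i ⬝ᵥ v (i - Pi.single j 1) :=
    Fintype.sum_equiv (Equiv.addRight (Pi.single j 1)) _ _ fun i => by simp
  simp only [Dp, Dm, smul_dotProduct, dotProduct_smul, sub_dotProduct, dotProduct_sub,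
    ← Finset.smul_sum, Finset.sum_sub_distrib, shift]
  module

theorem l2inner_lapl_left (u v : (Fin 3 → ZMod M) → Fin 3 → ℝ) :
    l2inner h (lapl h u) v = -gradInner h u v := by
  simp only [l2inner_eq_sum_dotProduct, gradInner, lapl, sum_dotProduct]
  rw [Finset.sum_comm]
  simp only [sum_Dp_dotProduct, Finset.sum_neg_distrib]
  rw [Finset.sum_comm (γ := Fin 3)]
  ring

theorem gradInner_midpoint_sub (u v : (Fin 3 → ZMod M) → Fin 3 → ℝ) :
    gradInner h ((2 : ℝ)⁻¹ • (u + v)) (v - u) = 2⁻¹ * (gradsq h v - gradsq h u) := by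
  simp only [gradsq_eq_gradInner, gradInner, Dm_smul, Dm_add, Dm_sub, Finset.mul_sum,
    ← Finset.sum_sub_distrib]
  refine Finset.sum_congr rfl fun i _ => Finset.sum_congr rfl fun j _ => ?_
  simp only [Pi.smul_apply, Pi.add_apply, Pi.sub_apply, smul_dotProduct, add_dotProduct,
    dotProduct_sub, smul_eq_mul, dotProduct_comm (Dm h v j i)]
  ring

theorem l2sq_sub_l2sq (u v w : (Fin 3 → ZMod M) → Fin 3 → ℝ) :
    l2sq h u - l2sq h v = l2inner h (u - v) (u - w) + l2inner h (u - v) (w + v) := by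
  simp only [l2sq, l2inner, ← mul_sub, ← mul_add, ← Finset.sum_sub_distrib,
    ← Finset.sum_add_distrib, Pi.sub_apply, Pi.add_apply]
  congr 1
  refine Finset.sum_congr rfl fun i _ => Finset.sum_congr rfl fun k _ => ?_
  ring

theorem abs_l2inner_le_l2norm_mul_l2norm (hh : 0 ≤ h) (u v : (Fin 3 → ZMod M) → Fin 3 → ℝ) :
    |l2inner h u v| ≤ l2norm h u * l2norm h v := by
  have cauchySchwarz : (∑ i, ∑ k, u i k * v i k) ^ 2
      ≤ (∑ i, ∑ k, u i k ^ 2) * ∑ i, ∑ k, v i k ^ 2 := by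
    simpa only [Fintype.sum_prod_type] using
      Finset.sum_mul_sq_le_sq_mul_sq Finset.univ (fun p : _ × Fin 3 => u p.1 p.2)
        (fun p => v p.1 p.2)
  rw [l2norm, l2norm, ← Real.sqrt_mul (by unfold l2sq; positivity)]
  apply Real.abs_le_sqrt
  calc l2inner h u v ^ 2 = h ^ 3 * h ^ 3 * (∑ i, ∑ k, u i k * v i k) ^ 2 := by
        rw [l2inner]; ring
    _ ≤ h ^ 3 * h ^ 3 * ((∑ i, ∑ k, u i k ^ 2) * ∑ i, ∑ k, v i k ^ 2) := by gcongr
    _ = l2sq h u * l2sq h v := by rw [l2sq, l2sq]; ring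

end GridCalculus

theorem iteration_energy_identity_general
    (M : ℕ) [NeZero M] (h Δt : ℝ) (hh : h = 1 / M) (hΔt : 0 < Δt)
    (dm wm ws ds1 ws1 : (Fin 3 → ZMod M) → Fin 3 → ℝ)
    (heq1 : ∀ i, Δt⁻¹ • (ds1 i - dm i)
      = crossProduct ((2 : ℝ)⁻¹ • (dm i + ds1 i)) ((2 : ℝ)⁻¹ • (wm i + ws i)))
    (heq2 : ∀ i, Δt⁻¹ • (ws1 i - wm i)
      = crossProduct (lapl h (fun j => (2 : ℝ)⁻¹ • (dm j + ds1 j)) i)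
          ((2 : ℝ)⁻¹ • (dm i + ds1 i))) :
    (1 / 2 : ℝ) * (l2sq h ws1 + gradsq h ds1)
        = (1 / 2 : ℝ) * (l2sq h wm + gradsq h dm)
          + (1 / 2 : ℝ) * l2inner h (ws1 - wm) (ws1 - ws) ∧
    |(1 / 2 : ℝ) * (l2sq h ws1 + gradsq h ds1)
        - (1 / 2 : ℝ) * (l2sq h wm + gradsq h dm)|
      ≤ (1 / 2 : ℝ) * l2norm h (ws1 - wm) * l2norm h (ws1 - ws) := by
  set dmid := (2 : ℝ)⁻¹ • (dm + ds1)
  have hmidpoint : l2inner h (ws1 - wm) (ws + wm) = 2 * l2inner h (lapl h dmid) (ds1 - dm) := by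
    simp only [l2inner_eq_sum_dotProduct, Finset.mul_sum]
    refine Finset.sum_congr rfl fun i _ => ?_
    have hi := dotProduct_eq_of_inv_smul_eq_cross hΔt.ne' (heq1 i) (heq2 i)
    rw [dotProduct_smul, smul_eq_mul] at hi
    calc h ^ 3 * (ws1 - wm) i ⬝ᵥ (ws + wm) i
        = 2 * (h ^ 3 * (2⁻¹ * (ws1 i - wm i) ⬝ᵥ (wm i + ws i))) := by
          rw [Pi.sub_apply, Pi.add_apply, add_comm (ws i)]; ring
      _ = 2 * (h ^ 3 * lapl h dmid i ⬝ᵥ (ds1 - dm) i) := by rw [hi]; rfl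
  have energy : (1 / 2 : ℝ) * (l2sq h ws1 + gradsq h ds1)
      = (1 / 2 : ℝ) * (l2sq h wm + gradsq h dm)
        + (1 / 2 : ℝ) * l2inner h (ws1 - wm) (ws1 - ws) := by
    have := l2sq_sub_l2sq h ws1 wm ws
    rw [hmidpoint, l2inner_lapl_left, gradInner_midpoint_sub] at this
    linarith
  refine ⟨energy, ?_⟩
  rw [energy, add_sub_cancel_left, abs_mul, abs_of_pos one_half_pos, mul_assoc]
  gcongr
  exact abs_l2inner_le_l2norm_mul_l2norm h (by rw [hh]; positivity) _ _

/-- Energy identity for one step of the fixed point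
iteration of the angular momentum scheme:
`½(‖wˢ⁺¹‖² + ‖∇_h dˢ⁺¹‖²) = ½(‖wᵐ‖² + ‖∇_h dᵐ‖²) + ½⟨wˢ⁺¹ − wᵐ, wˢ⁺¹ − wˢ⟩`,
and hence the energy deviation is at most `½‖wˢ⁺¹ − wᵐ‖ ‖wˢ⁺¹ − wˢ‖`. -/
theorem iteration_energy_identity
    (M : ℕ) [NeZero M] (hM : 1 ≤ M) (h Δt : ℝ) (hh : h = 1 / M) (hΔt : 0 < Δt)
    (dm wm ws ds1 ws1 : (Fin 3 → ZMod M) → Fin 3 → ℝ)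
    (heq1 : ∀ i, Δt⁻¹ • (ds1 i - dm i)
      = crossProduct ((2 : ℝ)⁻¹ • (dm i + ds1 i)) ((2 : ℝ)⁻¹ • (wm i + ws i)))
    (heq2 : ∀ i, Δt⁻¹ • (ws1 i - wm i)
      = crossProduct (lapl h (fun j => (2 : ℝ)⁻¹ • (dm j + ds1 j)) i)
          ((2 : ℝ)⁻¹ • (dm i + ds1 i))) :
    (1 / 2 : ℝ) * (l2sq h ws1 + gradsq h ds1)
        = (1 / 2 : ℝ) * (l2sq h wm + gradsq h dm)
          + (1 / 2 : ℝ) * l2inner h (ws1 - wm) (ws1 - ws) ∧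
    |(1 / 2 : ℝ) * (l2sq h ws1 + gradsq h ds1)
        - (1 / 2 : ℝ) * (l2sq h wm + gradsq h dm)|
      ≤ (1 / 2 : ℝ) * l2norm h (ws1 - wm) * l2norm h (ws1 - ws) :=
  iteration_energy_identity_general M h Δt hh hΔt dm wm ws ds1 ws1 heq1 heq2
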